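/- Let Γ be a profinite group and let L be a discrete Γ-module (i.e. Γ acts on L by group automorphisms and the stabilizer of every element of L is an open subgroup of Γ) whose underlying abelian group is finitely generated and free. Then the first continuous cohomology group H¹(Γ, L), computed with continuous cochains (equivalently, continuous crossed homomorphisms Γ → L modulo principal ones, L carrying the discrete topology), is finite. -/

import Mathlib

/-!
STATEMENT 18: Let `Γ` be a profinite group and `L` a discrete `Γ`-module (the action
is by group automorphisms of `L`, and every stabilizer is open) whose underlying
abelian group is finitely generated and free.  Then the first continuous cohomology
group `H¹(Γ, L)` (continuous = locally constant crossed homomorphisms `Γ → L`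
modulo principal ones) is finite.
-/

noncomputable section

namespace Stmt18

variable (Γ : Type*) [Group Γ] [TopologicalSpace Γ] [IsTopologicalGroup Γ]
variable (L : Type*) [AddCommGroup L] [DistribMulAction Γ L]

/-- Continuous (i.e. locally constant, for the discrete topology on `L`)
1-cocycles: crossed homomorphisms `Γ → L`. -/
def cocycles : AddSubgroup (Γ → L) where
  carrier := {c | IsLocallyConstant c ∧ ∀ g h : Γ, c (g * h) = c g + g • c h}
  add_mem' := by
    rintro a b ⟨ha, ha'⟩ ⟨hb, hb'⟩
    refine ⟨ha.add hb, fun g h => ?_⟩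
    simp only [Pi.add_apply, ha' g h, hb' g h, smul_add]
    abel
  zero_mem' := by
    refine ⟨IsLocallyConstant.const 0, fun g h => ?_⟩
    simp
  neg_mem' := by
    rintro a ⟨ha, ha'⟩
    refine ⟨ha.neg, fun g h => ?_⟩
    simp only [Pi.neg_apply, ha' g h, smul_neg]
    abel

/-- 1-coboundaries: principal crossed homomorphisms. -/
def coboundaries : AddSubgroup (Γ → L) where
  carrier := {c | ∃ x : L, ∀ g : Γ, c g = g • x - x}
  add_mem' := by
    rintro a b ⟨x, hx⟩ ⟨y, hy⟩
    refine ⟨x + y, fun g => ?_⟩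
    simp only [Pi.add_apply, hx g, hy g, smul_add]
    abel
  zero_mem' := ⟨0, fun g => by simp⟩
  neg_mem' := by
    rintro a ⟨x, hx⟩
    refine ⟨-x, fun g => ?_⟩
    simp only [Pi.neg_apply, hx g, smul_neg]
    abel

/-- Continuous group cohomology `H¹(Γ, L)` in degree `1`, defined via continuous
(locally constant) crossed homomorphisms modulo principal ones. -/
def H1 : Type _ :=
  cocycles Γ L ⧸ ((coboundaries Γ L).addSubgroupOf (cocycles Γ L))

/-!
The kernel `K` of the action is the intersection of the stabilizers of finitely many generators
of `L`, hence an open subgroup of finite index `m`. A continuous cocycle `c` has finite range and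
satisfies `c (k ^ j) = j • c k` for `k ∈ K`, so it vanishes on `K` because `L` is torsion-free;
hence `c` is constant on left cosets of `K`. This embeds `Z¹` into the finitely generated group
`Γ ⧸ K → L`, and averaging over `Γ ⧸ K` shows that `m • c` is the coboundary of
`-∑ q, c q.out`. So `H¹` is finitely generated and killed by `m`, hence finite.
-/

open groupCohomology MulAction

section FiniteH1

variable {G M : Type*} [Group G] [AddCommGroup M] [DistribMulAction G M] {f : G → M}

theorem map_pow_of_isCocycle₁ (hf : IsCocycle₁ f) {k : G} (hk : ∀ x : M, k • x = x) (j : ℕ) :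
    f (k ^ j) = j • f k := by
  induction j with
  | zero => simpa using map_one_of_isCocycle₁ hf
  | succ j ih => rw [pow_succ', hf, ih, hk, succ_nsmul]

theorem map_eq_zero_of_isCocycle₁ [IsAddTorsionFree M] (hf : IsCocycle₁ f)
    (hfin : (Set.range f).Finite) {k : G} (hk : ∀ x : M, k • x = x) : f k = 0 := by
  refine (isOfFinAddOrder_iff_eq_zero (f k)).mp (finite_multiples.mp (hfin.subset ?_))
  intro _ hx
  obtain ⟨j, rfl⟩ := (AddSubmonoid.mem_multiples_iff _ _).mp hx
  exact ⟨k ^ j, map_pow_of_isCocycle₁ hf hk j⟩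

theorem isCoboundary₁_index_nsmul_of_isCocycle₁ (hf : IsCocycle₁ f) (H : Subgroup G)
    [H.FiniteIndex] (hH : ∀ g, ∀ h ∈ H, f (g * h) = f g) : IsCoboundary₁ (H.index • f) := by
  have : Fintype (G ⧸ H) := H.fintypeQuotientOfFiniteIndex
  have hout (g : G) (q : G ⧸ H) : f (g • q).out = g • f q.out + f g := by
    obtain ⟨h, hh⟩ := QuotientGroup.mk_out_eq_mul H (g * q.out)
    rw [← MulAction.Quotient.mk_smul_out, smul_eq_mul, hh, hH _ h h.2, hf]
  set σ := ∑ q : G ⧸ H, f q.out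
  refine ⟨-σ, fun g => ?_⟩
  have hσ : σ = g • σ + H.index • f g := calc
    σ = ∑ q : G ⧸ H, f (g • q).out :=
      (Equiv.sum_comp (MulAction.toPerm g) fun q : G ⧸ H => f q.out).symm
    _ = g • σ + H.index • f g := by
      simp only [hout, Finset.sum_add_distrib, ← Finset.smul_sum, Finset.sum_const,
        Finset.card_univ, H.index_eq_card, Nat.card_eq_fintype_card]
      rfl
  rw [Pi.smul_apply, smul_neg, neg_sub_neg, sub_eq_iff_eq_add', ← hσ]

theorem isOpen_iInf_stabilizer [TopologicalSpace G] [AddGroup.FG M]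
    (hopen : ∀ x : M, IsOpen (stabilizer G x : Set G)) :
    IsOpen ((⨅ x : M, stabilizer G x : Subgroup G) : Set G) := by
  obtain ⟨s, hs⟩ := (AddGroup.FG.out : (⊤ : AddSubgroup M).FG)
  suffices ((⨅ x : M, stabilizer G x : Subgroup G) : Set G) = ⋂ x ∈ s, (stabilizer G x : Set G) by
    rw [this]
    exact isOpen_biInter_finset fun x _ => hopen x
  ext g
  simp only [Subgroup.coe_iInf, Set.mem_iInter, SetLike.mem_coe, mem_stabilizer_iff]
  refine ⟨fun hg x _ => hg x, fun hg x => ?_⟩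
  have : DistribSMul.toAddMonoidHom M g = AddMonoidHom.id M :=
    AddMonoidHom.eq_of_eqOn_dense hs fun x hx => hg x hx
  exact DFunLike.congr_fun this x

variable [TopologicalSpace G]

theorem isCocycle₁_of_mem_cocycles {c : G → M} (hc : c ∈ cocycles G M) : IsCocycle₁ c :=
  fun g h => (hc.2 g h).trans (add_comm _ _)

theorem map_mul_of_mem_cocycles [CompactSpace G] [IsAddTorsionFree M] {K : Subgroup G}
    (hK : ∀ k ∈ K, ∀ x : M, k • x = x) {c : G → M} (hc : c ∈ cocycles G M) (g : G) {k : G}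
    (hk : k ∈ K) : c (g * k) = c g := by
  have hf := isCocycle₁_of_mem_cocycles hc
  rw [hf, map_eq_zero_of_isCocycle₁ hf hc.1.range_finite (hK k hk), smul_zero, zero_add]

theorem fg_cocycles [CompactSpace G] [IsAddTorsionFree M] [AddGroup.FG M] {K : Subgroup G}
    [K.FiniteIndex] (hK : ∀ k ∈ K, ∀ x : M, k • x = x) : AddGroup.FG (cocycles G M) := by
  have : Module.Finite ℤ M := Module.Finite.iff_addGroup_fg.mpr inferInstance
  let restrict : cocycles G M →+ (G ⧸ K → M) :=
    { toFun := fun c q => (c : G → M) q.out, map_zero' := rfl, map_add' := fun _ _ => rfl }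
  refine Module.Finite.iff_addGroup_fg.mp <| Module.Finite.of_injective restrict.toIntLinearMap
    fun c c' h => Subtype.ext (funext fun g => ?_)
  obtain ⟨k, hk⟩ := QuotientGroup.mk_out_eq_mul K g
  have := congrFun h (g : G ⧸ K)
  simpa [restrict, hk, map_mul_of_mem_cocycles hK c.2, map_mul_of_mem_cocycles hK c'.2] using this

theorem index_nsmul_H1_eq_zero [CompactSpace G] [IsAddTorsionFree M] {K : Subgroup G}
    [K.FiniteIndex] (hK : ∀ k ∈ K, ∀ x : M, k • x = x)
    (x : cocycles G M ⧸ (coboundaries G M).addSubgroupOf (cocycles G M)) : K.index • x = 0 := by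
  obtain ⟨c, rfl⟩ := QuotientAddGroup.mk_surjective x
  rw [← QuotientAddGroup.mk_nsmul, QuotientAddGroup.eq_zero_iff, AddSubgroup.mem_addSubgroupOf]
  obtain ⟨y, hy⟩ := isCoboundary₁_index_nsmul_of_isCocycle₁ (isCocycle₁_of_mem_cocycles c.2) K
    fun g k hk => map_mul_of_mem_cocycles hK c.2 g hk
  exact ⟨y, fun g => (hy g).symm⟩

theorem finite_H1_of_isAddTorsionFree [SeparatelyContinuousMul G] [CompactSpace G]
    [AddGroup.FG M] [IsAddTorsionFree M] (hopen : ∀ x : M, IsOpen (stabilizer G x : Set G)) :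
    Finite (H1 G M) := by
  unfold H1
  set K := ⨅ x : M, stabilizer G x
  have hK : ∀ k ∈ K, ∀ x : M, k • x = x := fun k hk x => Subgroup.mem_iInf.mp hk x
  have : Finite (G ⧸ K) := K.quotient_finite_of_isOpen (isOpen_iInf_stabilizer hopen)
  have : K.FiniteIndex := K.finiteIndex_of_finite_quotient
  have := fg_cocycles hK
  have : AddGroup.FG (cocycles G M ⧸ (coboundaries G M).addSubgroupOf (cocycles G M)) :=
    AddGroup.fg_of_surjective (QuotientAddGroup.mk'_surjective _)
  exact AddCommGroup.finite_of_fg_isAddTorsion _ fun x => isOfFinAddOrder_iff_nsmul_eq_zero.mpr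
    ⟨K.index, Nat.pos_of_ne_zero Subgroup.FiniteIndex.index_ne_zero, index_nsmul_H1_eq_zero hK x⟩

end FiniteH1

theorem H1_finite_of_profinite_of_fg_free
    [CompactSpace Γ]
    (hopen : ∀ x : L, IsOpen {g : Γ | g • x = x})
    (hfree : ∃ n : ℕ, Nonempty (L ≃+ (Fin n → ℤ))) :
    Finite (H1 Γ L) := by
  obtain ⟨n, ⟨e⟩⟩ := hfree
  have : AddGroup.FG L := AddGroup.fg_of_surjective (f := e.symm.toAddMonoidHom) e.symm.surjective
  have : IsAddTorsionFree L := e.injective.isAddTorsionFree e.toAddMonoidHom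
  exact finite_H1_of_isAddTorsionFree hopen

end Stmt18
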